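/- Let μ < ν be valuations on K[x] and let φ ∈ KP(μ) be an MLV key polynomial for μ. Then: (1) if φ ∈ Φ_{μ,ν}, then the truncation ν_φ is a valuation on K[x] equal to the augmented valuation [μ; φ, ν(φ)], and μ < ν_φ ≤ ν; (2) if φ ∉ Φ_{μ,ν} and deg φ ≤ deg Φ_{μ,ν}, then ν_φ = μ; (3) if deg φ > deg Φ_{μ,ν}, then ν_φ is not a valuation (it fails multiplicativity for some pair of polynomials). -/

import Mathlib

/-!
Since `φ ∈ Φ_{μ,ν}` has minimal degree, `μ` and `ν` agree below `deg φ`, so `ν_φ` is the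
augmented valuation `[μ; φ, ν φ]`. That it is a valuation is MacLane's argument: for reduced
`a, b` the `μ`-irreducibility of `φ` gives `μ (a b mod φ) = μ a + μ b`. This bounds
`[μ; φ, γ] (f g)` from below termwise, and from above through the coefficient of `f g` whose
index is the sum of the first indices attaining the minima for `f` and for `g`: there the product
of those two terms dominates. If `μ φ = ν φ`, the same identification gives
`ν_φ = [μ; φ, μ φ] = μ`, because `φ` is `μ`-minimal. If some `χ ∈ Φ` has smaller degree, divide
`φ = q χ + e`: as `χ ∤_μ φ`, `μ e ≤ μ (q χ) < ν (q χ)`, while `ν_φ (χ q) ≤ ν e = μ e` and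
`ν_φ χ + ν_φ q = ν (χ q)`; the strict inequality uses that `μ < ν` forces `μ` to have trivial
support.
-/

open Polynomial

namespace KeyPolPaper

variable {K : Type*} [Field K] {Λ : Type*} [AddCommGroup Λ] [LinearOrder Λ] [IsOrderedAddMonoid Λ]

/-- A valuation on `F[X]` with values in `Λ ∪ {∞}`: multiplicative, satisfies the
ultrametric inequality, and is finite on nonzero constants. -/
def IsValuation {F : Type*} [Field F] (w : F[X] → WithTop Λ) : Prop :=
  w 0 = ⊤ ∧ (∀ f g : F[X], w (f * g) = w f + w g) ∧
    (∀ f g : F[X], min (w f) (w g) ≤ w (f + g)) ∧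
    ∀ a : F, a ≠ 0 → w (C a) ≠ ⊤

/-- `μ ≤ ν` for valuations on `K[X]`. -/
def ValLE (μ ν : K[X] → WithTop Λ) : Prop := ∀ f : K[X], μ f ≤ ν f

/-- `μ < ν` for valuations on `K[X]`. -/
def ValLT (μ ν : K[X] → WithTop Λ) : Prop := ValLE μ ν ∧ μ ≠ ν

/-- ν-equivalence: `f ∼_ν g` iff `ν (f - g) > ν f`. -/
def VEquiv (ν : K[X] → WithTop Λ) (f g : K[X]) : Prop := ν f < ν (f - g)

/-- ν-divisibility: `h ∣_ν g` iff `g ∼_ν q * h` for some `q`. -/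
def VDvd (ν : K[X] → WithTop Λ) (h g : K[X]) : Prop := ∃ q : K[X], VEquiv ν g (q * h)

/-- MacLane–Vaquié key polynomial: monic, ν-minimal and ν-irreducible. -/
def IsMLVKey (ν : K[X] → WithTop Λ) (φ : K[X]) : Prop :=
  φ.Monic ∧ (∀ f : K[X], f ≠ 0 → f.natDegree < φ.natDegree → ¬ VDvd ν φ f) ∧
    ¬ VDvd ν φ 1 ∧ ∀ f g : K[X], VDvd ν φ (f * g) → VDvd ν φ f ∨ VDvd ν φ g

/-- `e` is the value `ε(f) = max_{b ≥ 1} (ν f - ν (∂_b f)) / b`; phrased multiplicatively,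
`e` satisfies `ν f ≤ ν (∂_b f) + b • e` for all `b ≥ 1`, with equality for some `b ≥ 1`.
If `ν f = ∞` then `ε(f) = ∞`. -/
def IsEps (ν : K[X] → WithTop Λ) (f : K[X]) (e : WithTop Λ) : Prop :=
  (ν f = ⊤ ∧ e = ⊤) ∨
    (ν f ≠ ⊤ ∧ (∀ b : ℕ, 1 ≤ b → ν f ≤ ν (hasseDeriv b f) + b • e) ∧
      ∃ b : ℕ, 1 ≤ b ∧ ν f = ν (hasseDeriv b f) + b • e)

/-- The invariant `ε(f)`; well defined (for non-constant `f`) since `Λ` is divisible and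
the defining property determines `e` uniquely. -/
noncomputable def eps (ν : K[X] → WithTop Λ) (f : K[X]) : WithTop Λ :=
  letI := Classical.propDecidable (∃ e : WithTop Λ, IsEps ν f e)
  if h : ∃ e : WithTop Λ, IsEps ν f e then h.choose else ⊤

/-- The set `I(f)` of indices `b ≥ 1` with `ν (∂_b f) = ν f - b • ε(f)`. -/
def epsAttain (ν : K[X] → WithTop Λ) (f : K[X]) : Set ℕ :=
  {b : ℕ | 1 ≤ b ∧ ν f = ν (hasseDeriv b f) + b • eps ν f}

/-- Abstract key polynomial for `ν`. -/
def IsKeyPoly (ν : K[X] → WithTop Λ) (Q : K[X]) : Prop :=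
  Q.Monic ∧ 0 < Q.natDegree ∧
    ∀ f : K[X], 0 < f.natDegree → f.natDegree < Q.natDegree → eps ν f < eps ν Q

/-- The `s`-th coefficient of the canonical `Q`-expansion `f = Σ_s a_s Q^s`,
`deg a_s < deg Q`. -/
noncomputable def qCoeff (Q f : K[X]) (s : ℕ) : K[X] := ((· /ₘ Q)^[s] f) %ₘ Q

/-- The truncation `ν_Q (f) = min_s ν (a_s Q^s)`. -/
noncomputable def trunc (ν : K[X] → WithTop Λ) (Q f : K[X]) : WithTop Λ :=
  (Finset.range (f.natDegree + 1)).inf fun s => ν (qCoeff Q f s * Q ^ s)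

/-- `S_{ν,Q}(f)`: the set of indices attaining the minimum in `ν_Q(f)`. -/
def attain (ν : K[X] → WithTop Λ) (Q f : K[X]) : Set ℕ :=
  {s : ℕ | ν (qCoeff Q f s * Q ^ s) = trunc ν Q f}

/-- The augmented valuation `[μ; φ, γ] (f) = min_s (μ (a_s) + s • γ)` on φ-expansions. -/
noncomputable def augVal (μ : K[X] → WithTop Λ) (φ : K[X]) (γ : WithTop Λ) (f : K[X]) :
    WithTop Λ :=
  (Finset.range (f.natDegree + 1)).inf fun s => μ (qCoeff φ f s) + s • γ

/-- `Φ_{μ,ν}`: monic polynomials of minimal degree with `μ φ < ν φ`. -/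
def PhiSet (μ ν : K[X] → WithTop Λ) : Set K[X] :=
  {φ : K[X] | φ.Monic ∧ μ φ < ν φ ∧
    ∀ ψ : K[X], ψ.Monic → μ ψ < ν ψ → φ.natDegree ≤ ψ.natDegree}

/-- `mult f`: the least `b ≥ 1` with `∂_b f ≠ 0`. -/
noncomputable def multOf (f : K[X]) : ℕ := sInf {b : ℕ | 1 ≤ b ∧ hasseDeriv b f ≠ 0}

/-- Abstract limit key polynomial for `ν` (conditions (K1)-(K4)). -/
def IsLimitKeyPoly (ν : K[X] → WithTop Λ) (Q : K[X]) : Prop :=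
  Q.Monic ∧
    ∃ Qm : K[X], IsKeyPoly ν Qm ∧ ValLT (trunc ν Qm) ν ∧
      (∃ χ ∈ PhiSet (trunc ν Qm) ν, Qm.natDegree = χ.natDegree) ∧
      (∀ χ ∈ PhiSet (trunc ν Qm) ν, ∃ χ' ∈ PhiSet (trunc ν Qm) ν, ν χ < ν χ') ∧
      (∀ χ ∈ PhiSet (trunc ν Qm) ν, trunc ν χ Q < ν Q) ∧
      ∀ Q' : K[X], Q'.Monic →
        (∀ χ ∈ PhiSet (trunc ν Qm) ν, trunc ν χ Q' < ν Q') → Q.natDegree ≤ Q'.natDegree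

/-- A continuous MacLane chain of stable degree `m`: valuations `ρ_0 < ρ_1 < ⋯`,
monic key polynomials `χ_i` (for `i ≥ 1`) of degree `m`, with
`ρ_i = [ρ_{i-1}; χ_i, β_i]`, `β_i = ρ_i (χ_i) > ρ_{i-1} (χ_i)` and
`χ_{i+1} ∤_{ρ_i} χ_i`. -/
structure MacLaneChain (K : Type*) [Field K] (Λ : Type*) [AddCommGroup Λ] [LinearOrder Λ] [IsOrderedAddMonoid Λ] where
  m : ℕ
  hm : 0 < m
  ρ : ℕ → K[X] → WithTop Λ
  χ : ℕ → K[X]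
  β : ℕ → Λ
  isVal : ∀ i : ℕ, IsValuation (ρ i)
  mono : ∀ i : ℕ, ValLT (ρ i) (ρ (i + 1))
  monicChi : ∀ i : ℕ, (χ (i + 1)).Monic
  degChi : ∀ i : ℕ, (χ (i + 1)).natDegree = m
  keyChi : ∀ i : ℕ, IsMLVKey (ρ i) (χ (i + 1))
  beta_def : ∀ i : ℕ, ρ (i + 1) (χ (i + 1)) = (β (i + 1) : WithTop Λ)
  beta_lt : ∀ i : ℕ, ρ i (χ (i + 1)) < (β (i + 1) : WithTop Λ)
  aug : ∀ i : ℕ, ρ (i + 1) = augVal (ρ i) (χ (i + 1)) (β (i + 1) : WithTop Λ)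
  not_dvd : ∀ i : ℕ, ¬ VDvd (ρ (i + 1)) (χ (i + 2)) (χ (i + 1))

/-- A polynomial is stable w.r.t. the chain if its values `ρ_i f` are eventually constant. -/
def MacLaneChain.Stable (ch : MacLaneChain K Λ) (f : K[X]) : Prop :=
  ∃ i0 : ℕ, ∀ i : ℕ, i0 ≤ i → ch.ρ i f = ch.ρ i0 f

/-- The chain is essential: non-stable polynomials exist and all have degree `> m`. -/
def MacLaneChain.Essential (ch : MacLaneChain K Λ) : Prop :=
  (∃ f : K[X], ¬ ch.Stable f) ∧ ∀ f : K[X], ¬ ch.Stable f → ch.m < f.natDegree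

/-- MLV limit key polynomials of the chain: monic non-stable polynomials of minimal
degree `m_∞`. -/
def MacLaneChain.IsLimKP (ch : MacLaneChain K Λ) (φ : K[X]) : Prop :=
  φ.Monic ∧ ¬ ch.Stable φ ∧ ∀ f : K[X], ¬ ch.Stable f → φ.natDegree ≤ f.natDegree

/-- Convex subgroup of a linearly ordered abelian group. -/
def IsConvexSubgroup (H : AddSubgroup Λ) : Prop :=
  ∀ x y : Λ, 0 < x → x < y → y ∈ H → x ∈ H

/-- The value group of a valuation: the subgroup of `Λ` generated by the finite values. -/
def valueGroup {F : Type*} [Field F] (ρ : F[X] → WithTop Λ) : AddSubgroup Λ :=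
  AddSubgroup.closure {γ : Λ | ∃ f : F[X], ρ f = (γ : WithTop Λ)}

section Valuation

variable {ν : K[X] → WithTop Λ}

noncomputable def IsValuation.toAddValuation (hν : IsValuation ν) :
    AddValuation K[X] (WithTop Λ) :=
  AddValuation.of ν hν.1
    (by
      have h1 : ν 1 ≠ ⊤ := by simpa using hν.2.2.2 1 one_ne_zero
      have h := hν.2.1 1 1
      rw [mul_one] at h
      lift ν 1 to Λ using h1 with a
      have ha : a = a + a := by exact_mod_cast h
      rw [left_eq_add.mp ha, WithTop.coe_zero])
    hν.2.2.1 hν.2.1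

theorem IsValuation.map_zero (hν : IsValuation ν) : ν 0 = ⊤ := hν.toAddValuation.map_zero

theorem IsValuation.map_one (hν : IsValuation ν) : ν 1 = 0 := hν.toAddValuation.map_one

theorem IsValuation.map_mul (hν : IsValuation ν) (f g : K[X]) : ν (f * g) = ν f + ν g :=
  hν.toAddValuation.map_mul f g

theorem IsValuation.map_add (hν : IsValuation ν) (f g : K[X]) : min (ν f) (ν g) ≤ ν (f + g) :=
  hν.toAddValuation.map_add f g

theorem IsValuation.map_pow (hν : IsValuation ν) (f : K[X]) (n : ℕ) : ν (f ^ n) = n • ν f :=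
  hν.toAddValuation.map_pow f n

theorem IsValuation.map_neg (hν : IsValuation ν) (f : K[X]) : ν (-f) = ν f :=
  hν.toAddValuation.map_neg f

theorem IsValuation.map_sub_swap (hν : IsValuation ν) (f g : K[X]) : ν (f - g) = ν (g - f) :=
  hν.toAddValuation.map_sub_swap f g

theorem IsValuation.map_add_eq_of_lt_right (hν : IsValuation ν) {f g : K[X]} (h : ν g < ν f) :
    ν (f + g) = ν g :=
  hν.toAddValuation.map_add_eq_of_lt_right h

theorem IsValuation.map_eq_of_lt_sub (hν : IsValuation ν) {f g : K[X]} (h : ν f < ν (g - f)) :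
    ν g = ν f :=
  hν.toAddValuation.map_eq_of_lt_sub h

theorem IsValuation.map_add_of_eq_top (hν : IsValuation ν) (f : K[X]) {g : K[X]} (hg : ν g = ⊤) :
    ν (f + g) = ν f :=
  hν.toAddValuation.map_add_supp f hg

theorem IsValuation.le_map_sum (hν : IsValuation ν) {ι : Type*} {s : Finset ι} {f : ι → K[X]}
    {c : WithTop Λ} (h : ∀ i ∈ s, c ≤ ν (f i)) : c ≤ ν (∑ i ∈ s, f i) :=
  hν.toAddValuation.map_le_sum h

end Valuation

section Comparison

variable {μ ν : K[X] → WithTop Λ}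

theorem ValLE.eq_of_map_mul_eq (hle : ValLE μ ν) (hμ : IsValuation μ) (hν : IsValuation ν)
    {f g : K[X]} (h : μ (f * g) = ν (f * g)) (hfin : ν (f * g) ≠ ⊤) : μ f = ν f := by
  rw [hμ.map_mul, hν.map_mul] at h
  rw [hν.map_mul, WithTop.add_ne_top] at hfin
  have hf := hle f
  have hg := hle g
  lift ν f to Λ using hfin.1 with c
  lift ν g to Λ using hfin.2 with d
  lift μ f to Λ using ne_top_of_le_ne_top (WithTop.coe_ne_top) hf with a
  lift μ g to Λ using ne_top_of_le_ne_top (WithTop.coe_ne_top) hg with b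
  norm_cast at h hf hg ⊢
  exact ((add_eq_add_iff_eq_and_eq hf hg).1 h).1

theorem ValLE.map_C_eq (hle : ValLE μ ν) (hμ : IsValuation μ) (hν : IsValuation ν) (a : K) :
    μ (C a) = ν (C a) := by
  rcases eq_or_ne a 0 with rfl | ha
  · rw [C_0, hμ.map_zero, hν.map_zero]
  have hunit : C a * C a⁻¹ = 1 := by rw [← C_mul, mul_inv_cancel₀ ha, C_1]
  refine hle.eq_of_map_mul_eq hμ hν (g := C a⁻¹) ?_ ?_ <;>
    simp only [hunit, hμ.map_one, hν.map_one, ne_eq, WithTop.zero_ne_top, not_false_eq_true]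

theorem ValLE.map_eq_of_natDegree_lt_of_mem_PhiSet (hle : ValLE μ ν) (hμ : IsValuation μ)
    (hν : IsValuation ν) {ψ : K[X]} (hψ : ψ ∈ PhiSet μ ν) {f : K[X]} (hf : f.natDegree < ψ.natDegree) :
    μ f = ν f := by
  rcases eq_or_ne f 0 with rfl | hf0
  · rw [hμ.map_zero, hν.map_zero]
  have hlc : f.leadingCoeff ≠ 0 := leadingCoeff_ne_zero.2 hf0
  set f₀ := f * C f.leadingCoeff⁻¹
  have hf₀ : μ f₀ = ν f₀ := by
    refine (hle f₀).eq_of_not_lt fun hlt => ?_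
    have := hψ.2.2 f₀ (monic_mul_leadingCoeff_inv hf0) hlt
    rw [natDegree_mul_C (inv_ne_zero hlc)] at this
    omega
  have hf_eq : f = f₀ * C f.leadingCoeff := by
    rw [mul_assoc, ← C_mul, inv_mul_cancel₀ hlc, C_1, mul_one]
  rw [hf_eq, hμ.map_mul, hν.map_mul, hf₀, hle.map_C_eq hμ hν]

theorem irreducible_of_map_eq_top_of_minimal (hμ : IsValuation μ) {p : K[X]} (hp0 : p ≠ 0)
    (hp : μ p = ⊤) (hmin : ∀ r, r ≠ 0 → μ r = ⊤ → p.natDegree ≤ r.natDegree) :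
    Irreducible p := by
  have hunit : ∀ r : K[X], r ≠ 0 → r.natDegree = 0 → IsUnit r := fun r hr h =>
    isUnit_iff_degree_eq_zero.2 (by rw [degree_eq_natDegree hr, h]; rfl)
  refine ⟨fun ⟨u, hu⟩ => ?_, fun a b hab => ?_⟩
  · obtain ⟨c, hc, rfl⟩ := Polynomial.isUnit_iff.1 (hu ▸ u.isUnit)
    exact hμ.2.2.2 c hc.ne_zero (hu ▸ hp)
  · have ha : a ≠ 0 := by rintro rfl; exact hp0 (by rw [hab, zero_mul])
    have hb : b ≠ 0 := by rintro rfl; exact hp0 (by rw [hab, mul_zero])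
    have hdeg : p.natDegree = a.natDegree + b.natDegree := by rw [hab, natDegree_mul ha hb]
    rw [hab, hμ.map_mul, WithTop.add_eq_top] at hp
    rcases hp with h | h
    · exact Or.inr (hunit b hb (by have := hmin a ha h; omega))
    · exact Or.inl (hunit a ha (by have := hmin b hb h; omega))

theorem ValLE.eq_of_map_eq_top (hle : ValLE μ ν) (hμ : IsValuation μ) (hν : IsValuation ν)
    {f : K[X]} (hf0 : f ≠ 0) (hf : μ f = ⊤) : μ = ν := by
  obtain ⟨p, ⟨hp0, hp⟩, hmin⟩ :=
    (measure natDegree).wf.has_min {p : K[X] | p ≠ 0 ∧ μ p = ⊤} ⟨f, hf0, hf⟩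
  replace hmin : ∀ r, r ≠ 0 → μ r = ⊤ → p.natDegree ≤ r.natDegree :=
    fun r hr hrt => not_lt.1 (hmin r ⟨hr, hrt⟩)
  have hirr := irreducible_of_map_eq_top_of_minimal hμ hp0 hp hmin
  have hμ_mul : ∀ q, μ (p * q) = ⊤ := fun q => by rw [hμ.map_mul, hp, top_add]
  have hν_mul : ∀ q, ν (p * q) = ⊤ := fun q => top_le_iff.1 (hμ_mul q ▸ hle _)
  -- `r` is a unit modulo `p`, which generates both supports, so `μ (r * v) = ν (r * v) = 0`
  have hlow : ∀ r, r ≠ 0 → r.natDegree < p.natDegree → μ r = ν r := by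
    intro r hr hrp
    obtain ⟨u, v, huv⟩ := (hirr.coprime_iff_not_dvd).2
      fun hdvd => (natDegree_le_of_dvd hdvd hr).not_gt hrp
    have hrv : r * v = 1 + p * -u := by linear_combination huv
    refine hle.eq_of_map_mul_eq hμ hν (g := v) ?_ ?_ <;>
      simp only [hrv, hμ.map_add_of_eq_top _ (hμ_mul _), hν.map_add_of_eq_top _ (hν_mul _),
        hμ.map_one, hν.map_one, ne_eq, WithTop.zero_ne_top, not_false_eq_true]
  funext g
  rw [← EuclideanDomain.div_add_mod g p, add_comm, hμ.map_add_of_eq_top _ (hμ_mul _),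
    hν.map_add_of_eq_top _ (hν_mul _)]
  rcases eq_or_ne (g % p) 0 with h | h
  · rw [h, hμ.map_zero, hν.map_zero]
  · exact hlow _ h (natDegree_lt_natDegree h (degree_mod_lt g hp0))

theorem ValLT.map_ne_top (hlt : ValLT μ ν) (hμ : IsValuation μ) (hν : IsValuation ν) {f : K[X]}
    (hf : f ≠ 0) : μ f ≠ ⊤ :=
  fun h => hlt.2 (hlt.1.eq_of_map_eq_top hμ hν hf h)

end Comparison

section Expansion

variable {Q f g h : K[X]}

theorem qCoeff_add_index (Q f : K[X]) (s k : ℕ) :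
    qCoeff Q f (s + k) = qCoeff Q ((· /ₘ Q)^[k] f) s := by
  rw [qCoeff, qCoeff, Function.iterate_add_apply]

theorem qCoeff_zero_left (Q : K[X]) (s : ℕ) : qCoeff Q 0 s = 0 := by
  rw [qCoeff, Function.iterate_fixed (zero_divByMonic Q), zero_modByMonic]

theorem divByMonic_add (hQ : Q.Monic) (f g : K[X]) : (f + g) /ₘ Q = f /ₘ Q + g /ₘ Q :=
  (div_modByMonic_unique _ (f %ₘ Q + g %ₘ Q) hQ
    ⟨by linear_combination modByMonic_add_div f Q + modByMonic_add_div g Q,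
      (degree_add_le _ _).trans_lt
        (max_lt (degree_modByMonic_lt _ hQ) (degree_modByMonic_lt _ hQ))⟩).1

theorem qCoeff_add (hQ : Q.Monic) (f g : K[X]) (s : ℕ) :
    qCoeff Q (f + g) s = qCoeff Q f s + qCoeff Q g s := by
  induction s generalizing f g with
  | zero => exact add_modByMonic f g
  | succ s ih => simp only [qCoeff_add_index _ _ s 1, Function.iterate_one, divByMonic_add hQ, ih]

theorem natDegree_qCoeff_lt (hQ : Q.Monic) (hd : 0 < Q.natDegree) (f : K[X]) (s : ℕ) :
    (qCoeff Q f s).natDegree < Q.natDegree :=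
  natDegree_modByMonic_lt _ hQ fun h => by rw [h, natDegree_one] at hd; exact hd.false

theorem iterate_divByMonic_eq_zero (hQ : Q.Monic) (hd : 0 < Q.natDegree) {k : ℕ}
    (hk : f.natDegree < k) : (· /ₘ Q)^[k] f = 0 := by
  induction k generalizing f with
  | zero => omega
  | succ k ih =>
    rw [Function.iterate_succ_apply]
    rcases eq_or_ne (f /ₘ Q) 0 with h | h
    · rw [h, Function.iterate_fixed (zero_divByMonic Q)]
    · have hQf : Q.natDegree ≤ f.natDegree :=
        natDegree_le_natDegree (not_lt.1 (mt (divByMonic_eq_zero_iff hQ).2 h))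
      exact ih (by rw [natDegree_divByMonic f hQ]; omega)

theorem qCoeff_eq_zero_of_natDegree_lt (hQ : Q.Monic) (hd : 0 < Q.natDegree) {s : ℕ}
    (hs : f.natDegree < s) : qCoeff Q f s = 0 := by
  rw [qCoeff, iterate_divByMonic_eq_zero hQ hd hs, zero_modByMonic]

theorem sum_qCoeff_mul_pow_add (Q f : K[X]) (k : ℕ) :
    ∑ s ∈ Finset.range k, qCoeff Q f s * Q ^ s + Q ^ k * (· /ₘ Q)^[k] f = f := by
  induction k with
  | zero => simp
  | succ k ih =>
    rw [Finset.sum_range_succ, Function.iterate_succ_apply']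
    conv_rhs => rw [← ih]
    simp only [qCoeff]
    linear_combination Q ^ k * modByMonic_add_div ((· /ₘ Q)^[k] f) Q

theorem sum_qCoeff_mul_pow (hQ : Q.Monic) (hd : 0 < Q.natDegree) {n : ℕ} (hn : f.natDegree < n) :
    ∑ s ∈ Finset.range n, qCoeff Q f s * Q ^ s = f := by
  simpa [iterate_divByMonic_eq_zero hQ hd hn] using sum_qCoeff_mul_pow_add Q f n

theorem iterate_divByMonic_pow_mul (hQ : Q.Monic) (k : ℕ) (h : K[X]) :
    (· /ₘ Q)^[k] (Q ^ k * h) = h := by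
  induction k with
  | zero => simp
  | succ k ih =>
    rw [Function.iterate_succ_apply, pow_succ', mul_assoc, mul_divByMonic_cancel_left _ hQ, ih]

theorem qCoeff_pow_mul (hQ : Q.Monic) (h : K[X]) (s k : ℕ) :
    qCoeff Q (Q ^ k * h) (s + k) = qCoeff Q h s := by
  rw [qCoeff_add_index, iterate_divByMonic_pow_mul hQ]

theorem qCoeff_pow_mul_of_lt (hQ : Q.Monic) (h : K[X]) {s k : ℕ} (hs : s < k) :
    qCoeff Q (Q ^ k * h) s = 0 := by
  obtain ⟨j, rfl⟩ := Nat.exists_eq_add_of_lt hs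
  rw [qCoeff, add_assoc, pow_add, mul_assoc, iterate_divByMonic_pow_mul hQ, pow_succ', mul_assoc,
    (modByMonic_eq_zero_iff_dvd hQ).2 (dvd_mul_right _ _)]

theorem qCoeff_of_natDegree_lt (hQ : Q.Monic) (hh : h.natDegree < Q.natDegree) (s : ℕ) :
    qCoeff Q h s = if s = 0 then h else 0 := by
  have hdeg : h.degree < Q.degree := degree_lt_degree hh
  rcases s with _ | s
  · exact (modByMonic_eq_self_iff hQ).2 hdeg
  · rw [qCoeff_add_index _ _ s 1, Function.iterate_one, (divByMonic_eq_zero_iff hQ).2 hdeg,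
      qCoeff_zero_left, if_neg s.succ_ne_zero]

theorem qCoeff_pow_mul_of_natDegree_lt (hQ : Q.Monic) (hh : h.natDegree < Q.natDegree)
    (k s : ℕ) : qCoeff Q (Q ^ k * h) s = if s = k then h else 0 := by
  rcases lt_or_ge s k with hs | hs
  · rw [qCoeff_pow_mul_of_lt hQ h hs, if_neg hs.ne]
  · obtain ⟨j, rfl⟩ := Nat.exists_eq_add_of_le' hs
    rw [qCoeff_pow_mul hQ, qCoeff_of_natDegree_lt hQ hh]
    simp

end Expansion

section Truncation

variable {μ ν : K[X] → WithTop Λ} {φ f g a : K[X]} {γ : WithTop Λ}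

theorem augVal_le (hμ : IsValuation μ) (hφ : φ.Monic) (hd : 0 < φ.natDegree) (f : K[X])
    (s : ℕ) : augVal μ φ γ f ≤ μ (qCoeff φ f s) + s • γ := by
  rcases le_or_gt s f.natDegree with hs | hs
  · exact Finset.inf_le (Finset.mem_range.2 (Nat.lt_succ_of_le hs))
  · rw [qCoeff_eq_zero_of_natDegree_lt hφ hd hs, hμ.map_zero, top_add]
    exact le_top

omit [IsOrderedAddMonoid Λ] in
theorem le_augVal {c : WithTop Λ} (h : ∀ s, c ≤ μ (qCoeff φ f s) + s • γ) :
    c ≤ augVal μ φ γ f :=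
  Finset.le_inf fun s _ => h s

omit [IsOrderedAddMonoid Λ] in
theorem exists_augVal_eq (μ : K[X] → WithTop Λ) (φ : K[X]) (γ : WithTop Λ) (f : K[X]) :
    ∃ s, augVal μ φ γ f = μ (qCoeff φ f s) + s • γ := by
  obtain ⟨s, -, hs⟩ := Finset.exists_mem_eq_inf (Finset.range (f.natDegree + 1))
    ⟨0, Finset.mem_range.2 f.natDegree.succ_pos⟩ fun s => μ (qCoeff φ f s) + s • γ
  exact ⟨s, hs⟩

theorem augVal_mono {γ' : WithTop Λ} (hγ : γ ≤ γ') (f : K[X]) :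
    augVal μ φ γ f ≤ augVal μ φ γ' f :=
  Finset.inf_mono_fun fun s _ => by gcongr

theorem augVal_zero (hμ : IsValuation μ) : augVal μ φ γ 0 = ⊤ :=
  top_le_iff.1 <| le_augVal fun s => by rw [qCoeff_zero_left, hμ.map_zero, top_add]

theorem augVal_pow_mul (hμ : IsValuation μ) (hφ : φ.Monic) (ha : a.natDegree < φ.natDegree)
    (k : ℕ) : augVal μ φ γ (φ ^ k * a) = μ a + k • γ := by
  refine le_antisymm ?_ (le_augVal fun s => ?_)
  · simpa [qCoeff_pow_mul_of_natDegree_lt hφ ha] using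
      augVal_le hμ hφ ((Nat.zero_le _).trans_lt ha) (φ ^ k * a) k (γ := γ)
  · rw [qCoeff_pow_mul_of_natDegree_lt hφ ha]
    split_ifs with hs
    · rw [hs]
    · rw [hμ.map_zero, top_add]
      exact le_top

theorem augVal_of_natDegree_lt (hμ : IsValuation μ) (hφ : φ.Monic)
    (ha : a.natDegree < φ.natDegree) : augVal μ φ γ a = μ a := by
  simpa using augVal_pow_mul hμ hφ ha 0 (γ := γ)

theorem augVal_self (hμ : IsValuation μ) (hφ : φ.Monic) (hd : 0 < φ.natDegree) :
    augVal μ φ γ φ = γ := by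
  simpa [hμ.map_one] using augVal_pow_mul hμ hφ (a := 1) (by rwa [natDegree_one]) 1 (γ := γ)

theorem augVal_add (hμ : IsValuation μ) (hφ : φ.Monic) (hd : 0 < φ.natDegree) (f g : K[X]) :
    min (augVal μ φ γ f) (augVal μ φ γ g) ≤ augVal μ φ γ (f + g) :=
  le_augVal fun s => calc
    _ ≤ min (μ (qCoeff φ f s) + s • γ) (μ (qCoeff φ g s) + s • γ) :=
      min_le_min (augVal_le hμ hφ hd f s) (augVal_le hμ hφ hd g s)
    _ = min (μ (qCoeff φ f s)) (μ (qCoeff φ g s)) + s • γ := min_add_add_right _ _ _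
    _ ≤ μ (qCoeff φ (f + g) s) + s • γ := by
      rw [qCoeff_add hφ]
      gcongr
      exact hμ.map_add _ _

theorem le_augVal_sum (hμ : IsValuation μ) (hφ : φ.Monic) (hd : 0 < φ.natDegree) {ι : Type*}
    {t : Finset ι} {F : ι → K[X]} {c : WithTop Λ} (h : ∀ i ∈ t, c ≤ augVal μ φ γ (F i)) :
    c ≤ augVal μ φ γ (∑ i ∈ t, F i) :=
  Finset.sum_induction F (fun x => c ≤ augVal μ φ γ x)
    (fun _ _ hx hy => (le_min hx hy).trans (augVal_add hμ hφ hd _ _))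
    (by rw [augVal_zero hμ]; exact le_top) h

theorem trunc_eq_augVal (hν : IsValuation ν) (hφ : φ.Monic) (hd : 0 < φ.natDegree)
    (hagree : ∀ a : K[X], a.natDegree < φ.natDegree → μ a = ν a) :
    trunc ν φ = augVal μ φ (ν φ) :=
  funext fun f => Finset.inf_congr rfl fun s _ => by
    rw [hν.map_mul, hν.map_pow, hagree _ (natDegree_qCoeff_lt hφ hd f s)]

theorem trunc_le (hν : IsValuation ν) (hφ : φ.Monic) (hd : 0 < φ.natDegree) (f : K[X]) :
    trunc ν φ f ≤ ν f := by
  conv_rhs => rw [← sum_qCoeff_mul_pow hφ hd f.natDegree.lt_succ_self]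
  exact hν.le_map_sum fun s hs => Finset.inf_le hs

theorem trunc_of_natDegree_lt (hν : IsValuation ν) (hφ : φ.Monic)
    (hf : f.natDegree < φ.natDegree) : trunc ν φ f = ν f := by
  rw [trunc_eq_augVal hν hφ ((Nat.zero_le _).trans_lt hf) fun _ _ => rfl,
    augVal_of_natDegree_lt hν hφ hf]

end Truncation

section KeyPolynomial

variable {μ : K[X] → WithTop Λ} {φ a b : K[X]}

omit [AddCommGroup Λ] [IsOrderedAddMonoid Λ] in
theorem IsMLVKey.monic (hφ : IsMLVKey μ φ) : φ.Monic := hφ.1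

omit [AddCommGroup Λ] [IsOrderedAddMonoid Λ] in
theorem IsMLVKey.minimal (hφ : IsMLVKey μ φ) :
    ∀ f : K[X], f ≠ 0 → f.natDegree < φ.natDegree → ¬ VDvd μ φ f :=
  hφ.2.1

omit [AddCommGroup Λ] [IsOrderedAddMonoid Λ] in
theorem IsMLVKey.vdvd_or_vdvd (hφ : IsMLVKey μ φ) (h : VDvd μ φ (a * b)) :
    VDvd μ φ a ∨ VDvd μ φ b :=
  hφ.2.2.2 a b h

theorem natDegree_pos_of_not_vdvd_one (hμ : IsValuation μ) (hφ : φ.Monic)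
    (h : ¬ VDvd μ φ 1) : 0 < φ.natDegree := by
  refine Nat.pos_of_ne_zero fun h0 => h ⟨1, ?_⟩
  rw [VEquiv, eq_one_of_monic_natDegree_zero hφ h0, mul_one, sub_self, hμ.map_zero, hμ.map_one]
  exact WithTop.coe_lt_top 0

theorem IsMLVKey.natDegree_pos (hμ : IsValuation μ) (hφ : IsMLVKey μ φ) : 0 < φ.natDegree :=
  natDegree_pos_of_not_vdvd_one hμ hφ.monic hφ.2.2.1

theorem map_add_mul_eq_min (hμ : IsValuation μ)
    (hmin : ∀ f : K[X], f ≠ 0 → f.natDegree < φ.natDegree → ¬ VDvd μ φ f)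
    (ha : a.natDegree < φ.natDegree) (q : K[X]) :
    μ (a + φ * q) = min (μ a) (μ (φ * q)) := by
  rcases eq_or_ne a 0 with rfl | ha0
  · rw [zero_add, hμ.map_zero, min_eq_right le_top]
  rcases lt_or_ge (μ (φ * q)) (μ a) with h | h
  · rw [hμ.map_add_eq_of_lt_right h, min_eq_right h.le]
  · rw [min_eq_left h]
    refine le_antisymm (not_lt.1 fun hlt => hmin a ha0 ha ⟨-q, ?_⟩)
      (min_eq_left h ▸ hμ.map_add a (φ * q))
    rwa [VEquiv, show a - -q * φ = a + φ * q by ring]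

theorem map_eq_min_modByMonic_divByMonic (hμ : IsValuation μ) (hφ : φ.Monic)
    (hd : 0 < φ.natDegree)
    (hmin : ∀ f : K[X], f ≠ 0 → f.natDegree < φ.natDegree → ¬ VDvd μ φ f) (f : K[X]) :
    μ f = min (μ (f %ₘ φ)) (μ (φ * (f /ₘ φ))) := by
  conv_lhs => rw [← modByMonic_add_div f φ]
  exact map_add_mul_eq_min hμ hmin (natDegree_qCoeff_lt hφ hd f 0) _

theorem map_le_map_qCoeff_add_nsmul (hμ : IsValuation μ) (hφ : φ.Monic) (hd : 0 < φ.natDegree)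
    (hmin : ∀ f : K[X], f ≠ 0 → f.natDegree < φ.natDegree → ¬ VDvd μ φ f) (f : K[X]) (s : ℕ) :
    μ f ≤ μ (qCoeff φ f s) + s • μ φ := by
  induction s generalizing f with
  | zero =>
    rw [zero_smul, add_zero, map_eq_min_modByMonic_divByMonic hμ hφ hd hmin f]
    exact min_le_left _ _
  | succ s ih =>
    calc μ f ≤ μ (φ * (f /ₘ φ)) :=
          (map_eq_min_modByMonic_divByMonic hμ hφ hd hmin f).trans_le (min_le_right _ _)
      _ ≤ μ φ + (μ (qCoeff φ (f /ₘ φ) s) + s • μ φ) := by rw [hμ.map_mul]; gcongr; exact ih _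
      _ = μ (qCoeff φ f (s + 1)) + (s + 1) • μ φ := by
        rw [qCoeff_add_index _ _ s 1, Function.iterate_one, succ_nsmul]
        ac_rfl

theorem augVal_self_eq (hμ : IsValuation μ) (hφ : φ.Monic) (hd : 0 < φ.natDegree)
    (hmin : ∀ f : K[X], f ≠ 0 → f.natDegree < φ.natDegree → ¬ VDvd μ φ f) :
    augVal μ φ (μ φ) = μ := by
  refine funext fun f => le_antisymm ?_ (le_augVal (map_le_map_qCoeff_add_nsmul hμ hφ hd hmin f))
  rw [← trunc_eq_augVal hμ hφ hd fun _ _ => rfl]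
  exact trunc_le hμ hφ hd f

theorem IsMLVKey.map_modByMonic_mul (hμ : IsValuation μ) (hφ : IsMLVKey μ φ)
    (ha : a.natDegree < φ.natDegree) (hb : b.natDegree < φ.natDegree) :
    μ ((a * b) %ₘ φ) = μ a + μ b := by
  rcases eq_or_ne a 0 with rfl | ha0
  · rw [zero_mul, zero_modByMonic, hμ.map_zero, top_add]
  rcases eq_or_ne b 0 with rfl | hb0
  · rw [mul_zero, zero_modByMonic, hμ.map_zero, add_top]
  have hsplit :=
    map_eq_min_modByMonic_divByMonic hμ hφ.monic (hφ.natDegree_pos hμ) hφ.minimal (a * b)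
  rw [← hμ.map_mul]
  refine le_antisymm (not_lt.1 fun hlt => ?_) (hsplit ▸ min_le_left _ _)
  -- a strict drop from `μ (a * b)` to its remainder would make `φ` divide `a * b`
  have hdvd : VDvd μ φ (a * b) := ⟨(a * b) /ₘ φ, by
    rwa [VEquiv, mul_comm _ φ, ← modByMonic_eq_sub_mul_div]⟩
  rcases hφ.vdvd_or_vdvd hdvd with h | h
  · exact hφ.minimal a ha0 ha h
  · exact hφ.minimal b hb0 hb h

end KeyPolynomial

section Augmentation

variable {μ : K[X] → WithTop Λ} {φ f g a b : K[X]} {γ : WithTop Λ}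

theorem IsMLVKey.add_add_nsmul_le_augVal (hμ : IsValuation μ) (hφ : IsMLVKey μ φ)
    (hγ : μ φ ≤ γ) (ha : a.natDegree < φ.natDegree) (hb : b.natDegree < φ.natDegree) (k : ℕ) :
    μ a + μ b + k • γ ≤ augVal μ φ γ (φ ^ k * (a * b)) := by
  have hd := hφ.natDegree_pos hμ
  set r := (a * b) %ₘ φ
  set c := (a * b) /ₘ φ
  have hr : r.natDegree < φ.natDegree := natDegree_qCoeff_lt hφ.monic hd (a * b) 0
  have hc : c.natDegree < φ.natDegree := by
    have := natDegree_mul_le (p := a) (q := b)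
    rw [natDegree_divByMonic _ hφ.monic]
    omega
  have hμc : μ a + μ b ≤ μ c + μ φ := by
    rw [← hμ.map_mul, map_eq_min_modByMonic_divByMonic hμ hφ.monic hd hφ.minimal, hμ.map_mul,
      add_comm (μ c)]
    exact min_le_right _ _
  have hsplit : φ ^ k * (a * b) = φ ^ k * r + φ ^ (k + 1) * c := by
    linear_combination φ ^ k * (modByMonic_add_div (a * b) φ).symm
  calc μ a + μ b + k • γ ≤ min (μ r + k • γ) (μ c + (k + 1) • γ) := by
        refine le_min (by rw [hφ.map_modByMonic_mul hμ ha hb]) ?_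
        calc μ a + μ b + k • γ ≤ μ c + μ φ + k • γ := by gcongr
          _ ≤ μ c + γ + k • γ := by gcongr
          _ = μ c + (k + 1) • γ := by rw [succ_nsmul']; ac_rfl
    _ = min (augVal μ φ γ (φ ^ k * r)) (augVal μ φ γ (φ ^ (k + 1) * c)) := by
        rw [augVal_pow_mul hμ hφ.monic hr, augVal_pow_mul hμ hφ.monic hc]
    _ ≤ augVal μ φ γ (φ ^ k * (a * b)) := hsplit ▸ augVal_add hμ hφ.monic hd _ _

theorem IsMLVKey.augVal_add_augVal_le_augVal_mul (hμ : IsValuation μ) (hφ : IsMLVKey μ φ)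
    (hγ : μ φ ≤ γ) (f g : K[X]) :
    augVal μ φ γ f + augVal μ φ γ g ≤ augVal μ φ γ (f * g) := by
  have hd := hφ.natDegree_pos hμ
  have hfg : f * g = ∑ s ∈ Finset.range (f.natDegree + 1), ∑ t ∈ Finset.range (g.natDegree + 1),
      φ ^ (s + t) * (qCoeff φ f s * qCoeff φ g t) := by
    conv_lhs => rw [← sum_qCoeff_mul_pow hφ.monic hd f.natDegree.lt_succ_self,
      ← sum_qCoeff_mul_pow hφ.monic hd g.natDegree.lt_succ_self, Finset.sum_mul_sum]
    exact Finset.sum_congr rfl fun s _ => Finset.sum_congr rfl fun t _ => by ring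
  rw [hfg]
  refine le_augVal_sum hμ hφ.monic hd fun s _ => le_augVal_sum hμ hφ.monic hd fun t _ => ?_
  calc augVal μ φ γ f + augVal μ φ γ g
      ≤ (μ (qCoeff φ f s) + s • γ) + (μ (qCoeff φ g t) + t • γ) :=
        add_le_add (augVal_le hμ hφ.monic hd f s) (augVal_le hμ hφ.monic hd g t)
    _ = μ (qCoeff φ f s) + μ (qCoeff φ g t) + (s + t) • γ := by rw [add_nsmul]; ac_rfl
    _ ≤ _ := hφ.add_add_nsmul_le_augVal hμ hγ (natDegree_qCoeff_lt hφ.monic hd f s)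
        (natDegree_qCoeff_lt hφ.monic hd g t) _

theorem exists_augVal_split (hμ : IsValuation μ) (hφ : φ.Monic) (hd : 0 < φ.natDegree)
    (hf : augVal μ φ γ f ≠ ⊤) :
    ∃ (s : ℕ) (L D : K[X]), f = L + φ ^ s * D ∧ augVal μ φ γ f < augVal μ φ γ L ∧
      augVal μ φ γ f ≤ augVal μ φ γ (φ ^ s * D) ∧ augVal μ φ γ f = μ (D %ₘ φ) + s • γ := by
  classical
  have hex := exists_augVal_eq μ φ γ f
  set s := Nat.find hex
  set D := (· /ₘ φ)^[s] f
  have hlow : ∀ j, qCoeff φ (f - φ ^ s * D) j = qCoeff φ f j - qCoeff φ (φ ^ s * D) j :=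
    fun j => by rw [eq_sub_iff_add_eq, ← qCoeff_add hφ, sub_add_cancel]
  have hhigh : ∀ i, qCoeff φ (φ ^ s * D) (i + s) = qCoeff φ f (i + s) :=
    fun i => by rw [qCoeff_pow_mul hφ, qCoeff_add_index]
  refine ⟨s, f - φ ^ s * D, D, by ring, ?_, le_augVal fun j => ?_, Nat.find_spec hex⟩
  · obtain ⟨j, hj⟩ := exists_augVal_eq μ φ γ (f - φ ^ s * D)
    rw [hj, hlow]
    rcases lt_or_ge j s with hjs | hjs
    · rw [qCoeff_pow_mul_of_lt hφ _ hjs, sub_zero]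
      exact (augVal_le hμ hφ hd f j).lt_of_ne (Nat.find_min hex hjs)
    · obtain ⟨i, rfl⟩ := Nat.exists_eq_add_of_le' hjs
      rw [hhigh, sub_self, hμ.map_zero, top_add]
      exact lt_top_iff_ne_top.2 hf
  · rcases lt_or_ge j s with hjs | hjs
    · rw [qCoeff_pow_mul_of_lt hφ _ hjs, hμ.map_zero, top_add]
      exact le_top
    · obtain ⟨i, rfl⟩ := Nat.exists_eq_add_of_le' hjs
      rw [hhigh]
      exact augVal_le hμ hφ hd f _

theorem IsMLVKey.augVal_mul_le (hμ : IsValuation μ) (hφ : IsMLVKey μ φ) (hγ : μ φ ≤ γ)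
    (f g : K[X]) : augVal μ φ γ (f * g) ≤ augVal μ φ γ f + augVal μ φ γ g := by
  have hd := hφ.natDegree_pos hμ
  by_cases hf : augVal μ φ γ f = ⊤
  · rw [hf, top_add]
    exact le_top
  by_cases hg : augVal μ φ γ g = ⊤
  · rw [hg, add_top]
    exact le_top
  obtain ⟨s, L, D, hf_eq, hL, hD, hfD⟩ := exists_augVal_split hμ hφ.monic hd hf
  obtain ⟨t, L', D', hg_eq, hL', hD', hgD'⟩ := exists_augVal_split hμ hφ.monic hd hg
  set w := augVal μ φ γ
  set R := L * g + φ ^ s * D * L'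
  have hprod : f * g = R + φ ^ (s + t) * (D * D') := by
    linear_combination g * hf_eq + φ ^ s * D * hg_eq
  have hR : w f + w g < w R := by
    refine (lt_min ?_ ?_).trans_le (augVal_add hμ hφ.monic hd _ _)
    · exact (WithTop.add_lt_add_right hg hL).trans_le
        (hφ.augVal_add_augVal_le_augVal_mul hμ hγ _ _)
    · exact (WithTop.add_lt_add_of_le_of_lt hf hD hL').trans_le
        (hφ.augVal_add_augVal_le_augVal_mul hμ hγ _ _)
  have hfin : (s + t) • γ ≠ ⊤ := by
    rw [add_nsmul, WithTop.add_ne_top]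
    exact ⟨(WithTop.add_ne_top.1 (hfD ▸ hf)).2, (WithTop.add_ne_top.1 (hgD' ▸ hg)).2⟩
  have hlead : w f + w g = μ ((D * D') %ₘ φ) + (s + t) • γ := by
    rw [hfD, hgD', mul_modByMonic, hφ.map_modByMonic_mul hμ (a := D %ₘ φ) (b := D' %ₘ φ)
      (natDegree_qCoeff_lt hφ.monic hd D 0) (natDegree_qCoeff_lt hφ.monic hd D' 0), add_nsmul]
    ac_rfl
  have hcoeff : qCoeff φ (f * g) (s + t) = qCoeff φ R (s + t) + (D * D') %ₘ φ := by
    have := qCoeff_pow_mul hφ.monic (D * D') 0 (s + t)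
    rw [zero_add] at this
    rw [hprod, qCoeff_add hφ.monic, this]
    rfl
  -- the coefficient of index `s + t` of `f * g` is dominated by the product of leading terms
  have hdom : μ ((D * D') %ₘ φ) < μ (qCoeff φ R (s + t)) := by
    refine (WithTop.add_lt_add_iff_right hfin).1 ?_
    rw [← hlead]
    exact hR.trans_le (augVal_le hμ hφ.monic hd R _)
  calc w (f * g) ≤ μ (qCoeff φ (f * g) (s + t)) + (s + t) • γ := augVal_le hμ hφ.monic hd _ _
    _ = w f + w g := by rw [hcoeff, hμ.map_add_eq_of_lt_right hdom, hlead]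

theorem IsMLVKey.isValuation_augVal (hμ : IsValuation μ) (hφ : IsMLVKey μ φ) (hγ : μ φ ≤ γ) :
    IsValuation (augVal μ φ γ) := by
  have hd := hφ.natDegree_pos hμ
  refine ⟨augVal_zero hμ, fun f g => le_antisymm (hφ.augVal_mul_le hμ hγ f g)
    (hφ.augVal_add_augVal_le_augVal_mul hμ hγ f g), augVal_add hμ hφ.monic hd, fun a ha => ?_⟩
  rw [augVal_of_natDegree_lt hμ hφ.monic (by rwa [natDegree_C])]
  exact hμ.2.2.2 a ha

end Augmentation

section PhiSet

variable {μ ν : K[X] → WithTop Λ} {φ χ f : K[X]}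

theorem not_vdvd_of_map_lt (hμ : IsValuation μ) (hν : IsValuation ν) (hlt : ValLT μ ν)
    (hχ : μ χ < ν χ) (hf : μ f = ν f) : ¬ VDvd μ χ f := by
  rintro ⟨q, hq⟩
  have hq0 : q ≠ 0 := by
    rintro rfl
    rw [zero_mul, VEquiv, sub_zero] at hq
    exact hq.false
  have hμq : μ (q * χ) = μ f := hμ.map_eq_of_lt_sub (by rwa [hμ.map_sub_swap])
  have hνq : ν (q * χ) = ν f :=
    hν.map_eq_of_lt_sub (by rw [hν.map_sub_swap, ← hf]; exact hq.trans_le (hlt.1 _))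
  have h : μ (q * χ) < ν (q * χ) := by
    rw [hμ.map_mul, hν.map_mul]
    exact WithTop.add_lt_add_of_le_of_lt (hlt.map_ne_top hμ hν hq0) (hlt.1 q) hχ
  rw [hμq, hνq, hf] at h
  exact h.false

theorem IsMLVKey.not_vdvd_key (hμ : IsValuation μ) (hφ : IsMLVKey μ φ) (hχ0 : χ ≠ 0)
    (hdeg : χ.natDegree < φ.natDegree) (hχ : ¬ VDvd μ χ 1) : ¬ VDvd μ χ φ := by
  rintro ⟨q, hq⟩
  have hφfin : μ φ ≠ ⊤ := ne_top_of_lt hq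
  have hqχ : μ (q * χ) = μ φ := hμ.map_eq_of_lt_sub (by rwa [hμ.map_sub_swap])
  have hχfin : μ χ ≠ ⊤ := by
    have h := hqχ ▸ hφfin
    rw [hμ.map_mul] at h
    exact (WithTop.add_ne_top.1 h).2
  have hdvd : VDvd μ φ (q * χ) := ⟨1, by rwa [VEquiv, one_mul, hqχ, hμ.map_sub_swap]⟩
  rcases hφ.vdvd_or_vdvd hdvd with ⟨q', hq'⟩ | h
  · -- `φ ∼ q χ` and `q ∼ q' φ` force `μ (φ * (1 - q' * χ)) > μ φ`, that is `χ ∣_μ 1`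
    refine hχ ⟨q', ?_⟩
    have hsum : φ * (1 - q' * χ) = (φ - q * χ) + χ * (q - q' * φ) := by ring
    have h2 : μ φ < μ (χ * (q - q' * φ)) := by
      rw [← hqχ, hμ.map_mul, hμ.map_mul, add_comm (μ q)]
      exact (WithTop.add_lt_add_iff_left hχfin).2 hq'
    have h3 : μ φ + 0 < μ φ + μ (1 - q' * χ) := by
      rw [add_zero, ← hμ.map_mul, hsum]
      exact (lt_min hq h2).trans_le (hμ.map_add _ _)
    rw [VEquiv, hμ.map_one]
    exact (WithTop.add_lt_add_iff_left hφfin).1 h3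
  · exact hφ.minimal χ hχ0 hdeg h

theorem IsMLVKey.trunc_of_mem_PhiSet (hμ : IsValuation μ) (hν : IsValuation ν) (hle : ValLE μ ν)
    (hφ : IsMLVKey μ φ) (hin : φ ∈ PhiSet μ ν) :
    IsValuation (trunc ν φ) ∧ trunc ν φ = augVal μ φ (ν φ) ∧
      ValLT μ (trunc ν φ) ∧ ValLE (trunc ν φ) ν := by
  have hd := hφ.natDegree_pos hμ
  have htrunc : trunc ν φ = augVal μ φ (ν φ) :=
    trunc_eq_augVal hν hφ.monic hd fun _ ha =>
      hle.map_eq_of_natDegree_lt_of_mem_PhiSet hμ hν hin ha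
  refine ⟨htrunc ▸ hφ.isValuation_augVal hμ hin.2.1.le, htrunc, ⟨fun f => ?_, fun h => ?_⟩,
    trunc_le hν hφ.monic hd⟩
  · calc μ f = augVal μ φ (μ φ) f := by rw [augVal_self_eq hμ hφ.monic hd hφ.minimal]
      _ ≤ augVal μ φ (ν φ) f := augVal_mono hin.2.1.le f
      _ = trunc ν φ f := by rw [htrunc]
  · have hφφ := congrFun h φ
    rw [htrunc, augVal_self hμ hφ.monic hd] at hφφ
    exact hin.2.1.ne hφφ

theorem IsMLVKey.trunc_eq_of_not_mem_PhiSet (hμ : IsValuation μ) (hν : IsValuation ν)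
    (hle : ValLE μ ν) (hφ : IsMLVKey μ φ) (hnot : φ ∉ PhiSet μ ν)
    (hex : ∃ ψ ∈ PhiSet μ ν, φ.natDegree ≤ ψ.natDegree) : trunc ν φ = μ := by
  obtain ⟨ψ, hψ, hdeg⟩ := hex
  have hd := hφ.natDegree_pos hμ
  have hφeq : μ φ = ν φ := (hle φ).eq_of_not_lt fun h =>
    hnot ⟨hφ.monic, h, fun χ hχ hlt => hdeg.trans (hψ.2.2 χ hχ hlt)⟩
  rw [trunc_eq_augVal hν hφ.monic hd fun a ha =>
      hle.map_eq_of_natDegree_lt_of_mem_PhiSet hμ hν hψ (ha.trans_le hdeg),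
    ← hφeq, augVal_self_eq hμ hφ.monic hd hφ.minimal]

theorem IsMLVKey.exists_trunc_mul_ne (hμ : IsValuation μ) (hν : IsValuation ν) (hlt : ValLT μ ν)
    (hφ : IsMLVKey μ φ) (hex : ∃ χ ∈ PhiSet μ ν, χ.natDegree < φ.natDegree) :
    ∃ f g : K[X], trunc ν φ (f * g) ≠ trunc ν φ f + trunc ν φ g := by
  obtain ⟨χ, hχ, hdeg⟩ := hex
  have hd := hφ.natDegree_pos hμ
  have hχ1 : ¬ VDvd μ χ 1 := not_vdvd_of_map_lt hμ hν hlt hχ.2.1 (by rw [hμ.map_one, hν.map_one])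
  have hχd := natDegree_pos_of_not_vdvd_one hμ hχ.1 hχ1
  set q := φ /ₘ χ
  set e := φ %ₘ χ
  have hdiv : e + χ * q = φ := modByMonic_add_div φ χ
  have he : e.natDegree < χ.natDegree := natDegree_qCoeff_lt hχ.1 hχd φ 0
  have hq : q.natDegree < φ.natDegree := by
    rw [natDegree_divByMonic φ hχ.1]
    omega
  have he_le : μ e ≤ μ (χ * q) := not_lt.1 fun h => hφ.not_vdvd_key hμ hχ.1.ne_zero hdeg hχ1
    ⟨q, by rwa [VEquiv, ← hdiv, hμ.map_add_eq_of_lt_right h, show e + χ * q - q * χ = e by ring]⟩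
  have hq0 : q ≠ 0 := fun h =>
    (degree_lt_degree hdeg).asymm ((divByMonic_eq_zero_iff hχ.1).1 h)
  have hcoeff : qCoeff φ (χ * q) 0 = -e := by
    change (χ * q) %ₘ φ = -e
    rw [show χ * q = φ - e by linear_combination hdiv, sub_modByMonic, modByMonic_self hφ.monic,
      (modByMonic_eq_self_iff hφ.monic).2 (degree_lt_degree (he.trans hdeg)), zero_sub]
  refine ⟨χ, q, ne_of_lt ?_⟩
  calc trunc ν φ (χ * q) ≤ ν (qCoeff φ (χ * q) 0 * φ ^ 0) :=
        Finset.inf_le (Finset.mem_range.2 (Nat.succ_pos _))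
    _ = μ e := by
        rw [hcoeff, pow_zero, mul_one, hν.map_neg]
        exact (hlt.1.map_eq_of_natDegree_lt_of_mem_PhiSet hμ hν hχ he).symm
    _ ≤ μ (χ * q) := he_le
    _ < ν (χ * q) := by
        rw [hμ.map_mul, hν.map_mul, add_comm (μ χ), add_comm (ν χ)]
        exact WithTop.add_lt_add_of_le_of_lt (hlt.map_ne_top hμ hν hq0) (hlt.1 q) hχ.2.1
    _ = trunc ν φ χ + trunc ν φ q := by
        rw [hν.map_mul, trunc_of_natDegree_lt hν hφ.monic hdeg,
          trunc_of_natDegree_lt hν hφ.monic hq]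

end PhiSet

variable [Module ℚ Λ]

/-- for `μ < ν` and `φ ∈ KP(μ)`:
(1) if `φ ∈ Φ_{μ,ν}` then `ν_φ` is a valuation equal to `[μ; φ, ν φ]`, and `μ < ν_φ ≤ ν`;
(2) if `φ ∉ Φ_{μ,ν}` and `deg φ ≤ deg Φ_{μ,ν}` then `ν_φ = μ`;
(3) if `deg φ > deg Φ_{μ,ν}` then `ν_φ` is not a valuation (multiplicativity fails). -/
theorem stmt5 (μ ν : K[X] → WithTop Λ) (hμ : IsValuation μ) (hν : IsValuation ν)
    (hlt : ValLT μ ν) (φ : K[X]) (hφ : IsMLVKey μ φ) :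
    (φ ∈ PhiSet μ ν →
      IsValuation (trunc ν φ) ∧ trunc ν φ = augVal μ φ (ν φ) ∧
        ValLT μ (trunc ν φ) ∧ ValLE (trunc ν φ) ν) ∧
    (φ ∉ PhiSet μ ν → (∃ ψ ∈ PhiSet μ ν, φ.natDegree ≤ ψ.natDegree) → trunc ν φ = μ) ∧
    ((∃ ψ ∈ PhiSet μ ν, ψ.natDegree < φ.natDegree) →
      ∃ f g : K[X], trunc ν φ (f * g) ≠ trunc ν φ f + trunc ν φ g) :=
  ⟨hφ.trunc_of_mem_PhiSet hμ hν hlt.1, hφ.trunc_eq_of_not_mem_PhiSet hμ hν hlt.1,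
    hφ.exists_trunc_mul_ne hμ hν hlt⟩

end KeyPolPaper
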